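/- Let F be a cyclic Minkowski norm on a finite-dimensional real Lie algebra g with spray vector field η, connection operator N (with N differentiable in its first variable), and associated Riemann curvature R_y. If g_y(R_y(u),u) = 0 for all y ∈ g∖{0} and all u ∈ g, then c(g) + [g,g] = g, where c(g) is the center of g and [g,g] the derived subalgebra. -/

import Mathlib

/-!
If `y₀ ∉ c(g) + [g,g]`, then `F` attains a minimum on the coset `y₀ + [g,g]`, which avoids `0`
(`F` is coercive in finite dimension). By the first variation and Euler's relation, a minimizer
`y` satisfies `g_y(y, [g,g]) = 0`. Then `η(y) = 0`, so the Cartan term of `N(y, ·)` drops out;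
cyclicity makes `u ↦ [u,y]` `g_y`-symmetric, whence `N(y,v) = [v,y]` and
`R_y(u) = -[[u,y],y]`. Flatness gives `g_y([u,y],[u,y]) = 0`, so `y` is central and
`y₀ = y - (y - y₀) ∈ c(g) + [g,g]`.
-/

noncomputable section

/-- The fundamental tensor `g_y(u,v) = (1/2)·∂²/∂s∂t|_{s=t=0} F(y+su+tv)²`. -/
def gTensor {V : Type*} [NormedAddCommGroup V] [NormedSpace ℝ V]
    (F : V → ℝ) (y u v : V) : ℝ :=
  (1 / 2) * deriv (fun s : ℝ => deriv (fun t : ℝ => (F (y + s • u + t • v)) ^ 2) 0) 0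

/-- The Cartan tensor `C_y(u,v,w) = (1/2)·d/dt|_{t=0} g_{y+tw}(u,v)`. -/
def cartanTensor {V : Type*} [NormedAddCommGroup V] [NormedSpace ℝ V]
    (F : V → ℝ) (y u v w : V) : ℝ :=
  (1 / 2) * deriv (fun t : ℝ => gTensor F (y + t • w) u v) 0

/-- `F` is a Minkowski norm: positive and smooth away from `0`, positively
homogeneous of degree one, with positive-definite symmetric bilinear fundamental tensor. -/
structure IsMinkowskiNorm {V : Type*} [NormedAddCommGroup V] [NormedSpace ℝ V]
    (F : V → ℝ) : Prop where
  pos : ∀ y : V, y ≠ 0 → 0 < F y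
  smooth : ContDiffOn ℝ (⊤ : ℕ∞) F {(0 : V)}ᶜ
  homog : ∀ c : ℝ, 0 < c → ∀ y : V, F (c • y) = c * F y
  g_symm : ∀ y : V, y ≠ 0 → ∀ u v : V, gTensor F y u v = gTensor F y v u
  g_add_left : ∀ y : V, y ≠ 0 → ∀ u u' v : V,
    gTensor F y (u + u') v = gTensor F y u v + gTensor F y u' v
  g_smul_left : ∀ y : V, y ≠ 0 → ∀ (c : ℝ) (u v : V),
    gTensor F y (c • u) v = c * gTensor F y u v
  g_posdef : ∀ y : V, y ≠ 0 → ∀ u : V, u ≠ 0 → 0 < gTensor F y u u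

/-- A Lie algebra structure on the real vector space `V`, given as a bilinear map. -/
structure IsLieBracket {V : Type*} [AddCommGroup V] [Module ℝ V]
    (L : V →ₗ[ℝ] V →ₗ[ℝ] V) : Prop where
  alternate : ∀ x : V, L x x = 0
  jacobi : ∀ x y z : V, L x (L y z) = L (L x y) z + L y (L x z)

/-- The cyclic condition for a Minkowski norm on a Lie algebra. -/
def IsCyclicNorm {V : Type*} [NormedAddCommGroup V] [NormedSpace ℝ V]
    (L : V →ₗ[ℝ] V →ₗ[ℝ] V) (F : V → ℝ) : Prop :=
  ∀ y : V, y ≠ 0 → ∀ x z : V,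
    gTensor F y (L x y) z + gTensor F y (L y z) x + gTensor F y (L z x) y = 0

/-- The Riemann curvature `R_y(u) = D_η N(y,u) − N(y,N(y,u)) + N(y,[y,u]) − [y,N(y,u)]`. -/
def RiemannCurv {V : Type*} [NormedAddCommGroup V] [NormedSpace ℝ V]
    (L : V →ₗ[ℝ] V →ₗ[ℝ] V) (η : V → V) (N : V → V → V) (y u : V) : V :=
  fderiv ℝ (fun z => N z u) y (η y) - N y (N y u) + N y (L y u) - L y (N y u)

/-- Projection onto `m` along `h` in the decomposition `g = h ⊕ m`. -/
def projTo {V : Type*} [AddCommGroup V] [Module ℝ V] (h m : Submodule ℝ V)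
    (hcompl : IsCompl h m) : V →ₗ[ℝ] m :=
  m.linearProjOfIsCompl h hcompl.symm

/-- The inner product making the basis `e` orthonormal. -/
def basisInner {V : Type*} [AddCommGroup V] [Module ℝ V] {ι : Type*} [Fintype ι]
    (e : Module.Basis ι ℝ V) (x y : V) : ℝ :=
  ∑ k, e.repr x k * e.repr y k


/-- The center `c(g) = {x : [x,v] = 0 ∀ v}` of the Lie bracket `L`. -/
def centerOf {V : Type*} [AddCommGroup V] [Module ℝ V]
    (L : V →ₗ[ℝ] V →ₗ[ℝ] V) : Submodule ℝ V where
  carrier := {x | ∀ v : V, L x v = 0}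
  add_mem' := by
    intro a b ha hb v
    simp [map_add, ha v, hb v]
  zero_mem' := by
    intro v
    simp
  smul_mem' := by
    intro c a ha v
    simp [map_smul, ha v]

/-- The derived subalgebra `[g,g]` (the span of all brackets) of the Lie bracket `L`. -/
def derivedOf {V : Type*} [AddCommGroup V] [Module ℝ V]
    (L : V →ₗ[ℝ] V →ₗ[ℝ] V) : Submodule ℝ V :=
  Submodule.span ℝ {z | ∃ x y : V, z = L x y}

open Filter Topology

namespace IsMinkowskiNorm

variable {V : Type*} [NormedAddCommGroup V] [NormedSpace ℝ V] {F : V → ℝ}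

theorem deriv_sq_smul_add (hF : IsMinkowskiNorm F) {c : ℝ} (hc : 0 < c) (y v : V) :
    deriv (fun t : ℝ => F (c • y + t • v) ^ 2) 0 =
      c * deriv (fun t : ℝ => F (y + t • v) ^ 2) 0 := by
  set φ : ℝ → ℝ := fun t => F (y + t • v) ^ 2
  have hfun : (fun t : ℝ => F (c • y + t • v) ^ 2) = fun t => c ^ 2 * φ (c⁻¹ * t) := by
    funext t
    rw [show c • y + t • v = c • (y + (c⁻¹ * t) • v) by
      rw [smul_add, smul_smul, mul_inv_cancel_left₀ hc.ne'], hF.homog c hc]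
    ring
  rw [hfun, deriv_const_mul_field, deriv_comp_mul_left (f := φ), mul_zero, smul_eq_mul]
  field_simp

theorem gTensor_self_left (hF : IsMinkowskiNorm F) (y v : V) :
    gTensor F y y v = 1 / 2 * deriv (fun t : ℝ => F (y + t • v) ^ 2) 0 := by
  set c := deriv (fun t : ℝ => F (y + t • v) ^ 2) 0
  have hline : (fun s : ℝ => deriv (fun t : ℝ => F (y + s • y + t • v) ^ 2) 0)
      =ᶠ[𝓝 0] fun s => (1 + s) * c := by
    filter_upwards [Ioi_mem_nhds (show (-1 : ℝ) < 0 by norm_num)] with s hs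
    have hpos : 0 < 1 + s := by linarith [Set.mem_Ioi.1 hs]
    simpa only [add_smul, one_smul] using hF.deriv_sq_smul_add hpos y v
  have hderiv : HasDerivAt (fun s : ℝ => (1 + s) * c) c 0 := by
    simpa using ((hasDerivAt_id (0 : ℝ)).const_add 1).mul_const c
  rw [gTensor, hline.deriv_eq, hderiv.deriv]

theorem gTensor_neg_left (hF : IsMinkowskiNorm F) {y : V} (hy : y ≠ 0) (u v : V) :
    gTensor F y (-u) v = -gTensor F y u v := by
  simpa using hF.g_smul_left y hy (-1) u v

theorem eq_zero_of_gTensor_self (hF : IsMinkowskiNorm F) {y w : V} (hy : y ≠ 0)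
    (h : gTensor F y w w = 0) : w = 0 := by
  by_contra hw
  exact (hF.g_posdef y hy w hw).ne' h

theorem eq_of_forall_gTensor_eq (hF : IsMinkowskiNorm F) {y a b : V} (hy : y ≠ 0)
    (h : ∀ u, gTensor F y a u = gTensor F y b u) : a = b := by
  refine sub_eq_zero.1 (hF.eq_zero_of_gTensor_self hy ?_)
  rw [sub_eq_add_neg, hF.g_add_left y hy, hF.gTensor_neg_left hy, h, add_neg_cancel]

theorem gTensor_self_eq_zero_of_forall_le (hF : IsMinkowskiNorm F) {y v : V} (hy : y ≠ 0)
    (hmin : ∀ t : ℝ, F y ≤ F (y + t • v)) : gTensor F y y v = 0 := by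
  have hlocal : IsLocalMin (fun t : ℝ => F (y + t • v) ^ 2) 0 :=
    Filter.Eventually.of_forall fun t => by
      simpa using pow_le_pow_left₀ (hF.pos y hy).le (hmin t) 2
  rw [hF.gTensor_self_left, hlocal.deriv_eq_zero, mul_zero]

theorem exists_pos_mul_norm_le [FiniteDimensional ℝ V] (hF : IsMinkowskiNorm F) :
    ∃ m > 0, ∀ x : V, x ≠ 0 → m * ‖x‖ ≤ F x := by
  have hsphere : Metric.sphere (0 : V) 1 ⊆ {0}ᶜ := fun x hx h0 => by simp_all
  obtain ⟨m, hm, hmF⟩ := (isCompact_sphere (0 : V) 1).exists_forall_le'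
    (hF.smooth.continuousOn.mono hsphere) fun x hx => hF.pos x (hsphere hx)
  refine ⟨m, hm, fun x hx => ?_⟩
  have hnx : 0 < ‖x‖ := norm_pos_iff.2 hx
  have hunit : ‖x‖⁻¹ • x ∈ Metric.sphere (0 : V) 1 := by
    simp [norm_smul, hnx.ne']
  calc m * ‖x‖ ≤ F (‖x‖⁻¹ • x) * ‖x‖ := by gcongr; exact hmF _ hunit
    _ = F x := by rw [hF.homog _ (inv_pos.2 hnx)]; field_simp

theorem exists_isMinOn [FiniteDimensional ℝ V] (hF : IsMinkowskiNorm F) {S : Set V}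
    (hS : IsClosed S) (hS0 : (0 : V) ∉ S) (hne : S.Nonempty) : ∃ y ∈ S, IsMinOn F S y := by
  have := FiniteDimensional.proper ℝ V
  obtain ⟨y₀, hy₀⟩ := hne
  obtain ⟨m, hm, hmF⟩ := hF.exists_pos_mul_norm_le
  have hS0' : S ⊆ {0}ᶜ := fun x hx h0 => hS0 (by simp_all)
  refine (hF.smooth.continuousOn.mono hS0').exists_isMinOn' hS hy₀ ?_
  have hfar : ∀ᶠ x in cocompact V, F y₀ / m ≤ ‖x‖ :=
    tendsto_norm_cocompact_atTop.eventually_ge_atTop _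
  filter_upwards [hfar.filter_mono inf_le_left, mem_inf_of_right (mem_principal_self S)]
    with x hx hxS
  calc F y₀ ≤ m * ‖x‖ := by rwa [div_le_iff₀' hm] at hx
    _ ≤ F x := hmF x (hS0' hxS)

theorem exists_sub_mem_and_perp [FiniteDimensional ℝ V] (hF : IsMinkowskiNorm F)
    {W : Submodule ℝ V} {y₀ : V} (hy₀ : y₀ ∉ W) :
    ∃ y, y - y₀ ∈ W ∧ y ≠ 0 ∧ ∀ v ∈ W, gTensor F y y v = 0 := by
  set S : Set V := (· - y₀) ⁻¹' W
  have hS : IsClosed S := W.closed_of_finiteDimensional.preimage (continuous_sub_right y₀)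
  have hS0 : (0 : V) ∉ S := fun h => hy₀ (by simpa [S] using W.neg_mem h)
  obtain ⟨y, hyS, hmin⟩ := hF.exists_isMinOn hS hS0 ⟨y₀, by simp [S]⟩
  have hy : y ≠ 0 := by rintro rfl; exact hS0 hyS
  refine ⟨y, hyS, hy, fun v hv => hF.gTensor_self_eq_zero_of_forall_le hy fun t => hmin ?_⟩
  simpa [S, add_sub_right_comm] using W.add_mem hyS (W.smul_mem t hv)

end IsMinkowskiNorm

theorem IsLieBracket.swap {V : Type*} [AddCommGroup V] [Module ℝ V]
    {L : V →ₗ[ℝ] V →ₗ[ℝ] V} (hL : IsLieBracket L) (a b : V) : L a b = -L b a := by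
  have h := hL.alternate (a + b)
  simp only [map_add, LinearMap.add_apply, hL.alternate, zero_add, add_zero] at h
  exact eq_neg_of_add_eq_zero_right h

theorem bracket_mem_derivedOf {V : Type*} [AddCommGroup V] [Module ℝ V]
    (L : V →ₗ[ℝ] V →ₗ[ℝ] V) (u v : V) : L u v ∈ derivedOf L :=
  Submodule.subset_span ⟨u, v, rfl⟩

theorem cartanTensor_zero_right {V : Type*} [NormedAddCommGroup V] [NormedSpace ℝ V]
    (F : V → ℝ) (y u v : V) : cartanTensor F y u v 0 = 0 := by
  simp [cartanTensor]

section OrthogonalToDerived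

variable {V : Type*} [NormedAddCommGroup V] [NormedSpace ℝ V] {L : V →ₗ[ℝ] V →ₗ[ℝ] V}
  {F : V → ℝ} {y : V}

theorem spray_eq_zero_of_perp (hF : IsMinkowskiNorm F) (hy : y ≠ 0) {η : V → V}
    (hη : ∀ u, gTensor F y (η y) u = gTensor F y y (L u y))
    (hperp : ∀ v ∈ derivedOf L, gTensor F y y v = 0) : η y = 0 :=
  hF.eq_zero_of_gTensor_self hy <| by rw [hη]; exact hperp _ (bracket_mem_derivedOf L _ _)

theorem gTensor_bracket_comm_of_perp (hL : IsLieBracket L) (hF : IsMinkowskiNorm F)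
    (hcyc : IsCyclicNorm L F) (hy : y ≠ 0) (hperp : ∀ v ∈ derivedOf L, gTensor F y y v = 0)
    (x z : V) : gTensor F y (L x y) z = gTensor F y (L z y) x := by
  have hcyc := hcyc y hy x z
  rw [hF.g_symm y hy (L z x), hperp _ (bracket_mem_derivedOf L z x), hL.swap y z,
    hF.gTensor_neg_left hy] at hcyc
  linarith

theorem connection_eq_bracket_of_perp (hL : IsLieBracket L) (hF : IsMinkowskiNorm F)
    (hcyc : IsCyclicNorm L F) (hy : y ≠ 0) (hperp : ∀ v ∈ derivedOf L, gTensor F y y v = 0)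
    {η : V → V} {N : V → V → V} (hη : η y = 0)
    (hN : ∀ u v, 2 * gTensor F y (N y v) u =
        gTensor F y (L u v) y + gTensor F y (L u y) v + gTensor F y (L v y) u
          - 2 * cartanTensor F y u v (η y))
    (v : V) : N y v = L v y := by
  refine hF.eq_of_forall_gTensor_eq hy fun u => ?_
  have hN := hN u v
  rw [hη, cartanTensor_zero_right, hF.g_symm y hy (L u v), hperp _ (bracket_mem_derivedOf L u v),
    gTensor_bracket_comm_of_perp hL hF hcyc hy hperp u v] at hN
  linarith

theorem riemannCurv_eq_of_spray_eq_zero (hL : IsLieBracket L) {η : V → V} {N : V → V → V}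
    (hη : η y = 0) (hN : ∀ v, N y v = L v y) (u : V) :
    RiemannCurv L η N y u = -L (L u y) y := by
  rw [RiemannCurv, hη, map_zero, hN, hN, hN, hL.swap y u, hL.swap y (L u y), map_neg,
    LinearMap.neg_apply]
  abel

theorem mem_centerOf_of_perp (hL : IsLieBracket L) (hF : IsMinkowskiNorm F)
    (hcyc : IsCyclicNorm L F) (hy : y ≠ 0) (hperp : ∀ v ∈ derivedOf L, gTensor F y y v = 0)
    {η : V → V} {N : V → V → V}
    (hη : ∀ u, gTensor F y (η y) u = gTensor F y y (L u y))
    (hN : ∀ u v, 2 * gTensor F y (N y v) u =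
        gTensor F y (L u v) y + gTensor F y (L u y) v + gTensor F y (L v y) u
          - 2 * cartanTensor F y u v (η y))
    (hflat : ∀ u, gTensor F y (RiemannCurv L η N y u) u = 0) : y ∈ centerOf L := by
  have hη₀ := spray_eq_zero_of_perp hF hy hη hperp
  have hNy := connection_eq_bracket_of_perp hL hF hcyc hy hperp hη₀ hN
  have hbracket : ∀ u, L u y = 0 := fun u => by
    refine hF.eq_zero_of_gTensor_self hy ?_
    have hflat := hflat u
    rw [riemannCurv_eq_of_spray_eq_zero hL hη₀ hNy, hF.gTensor_neg_left hy,
      gTensor_bracket_comm_of_perp hL hF hcyc hy hperp] at hflat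
    linarith
  intro v
  rw [hL.swap, hbracket, neg_zero]

end OrthogonalToDerived

theorem flat_cyclic_center_add_derived_eq_top_general
    {g : Type*} [NormedAddCommGroup g] [NormedSpace ℝ g] [FiniteDimensional ℝ g]
    (L : g →ₗ[ℝ] g →ₗ[ℝ] g) (hL : IsLieBracket L)
    (F : g → ℝ) (hF : IsMinkowskiNorm F) (hcyc : IsCyclicNorm L F)
    (η : g → g) (N : g → g → g)
    (hη : ∀ y : g, y ≠ 0 → ∀ u : g, gTensor F y (η y) u = gTensor F y y (L u y))
    (hN : ∀ y : g, y ≠ 0 → ∀ u v : g,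
      2 * gTensor F y (N y v) u =
        gTensor F y (L u v) y + gTensor F y (L u y) v + gTensor F y (L v y) u
          - 2 * cartanTensor F y u v (η y))
    (hflat : ∀ y : g, y ≠ 0 → ∀ u : g, gTensor F y (RiemannCurv L η N y u) u = 0) :
    centerOf L ⊔ derivedOf L = ⊤ := by
  refine Submodule.eq_top_iff'.2 fun y₀ => ?_
  by_cases hy₀ : y₀ ∈ derivedOf L
  · exact Submodule.mem_sup_right hy₀
  obtain ⟨y, hyy₀, hy, hperp⟩ := hF.exists_sub_mem_and_perp hy₀
  have hyc : y ∈ centerOf L :=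
    mem_centerOf_of_perp hL hF hcyc hy hperp (hη y hy) (hN y hy) (hflat y hy)
  simpa using Submodule.sub_mem _ (Submodule.mem_sup_left hyc) (Submodule.mem_sup_right hyy₀)

/-- For a Finsler cyclic Lie group with flag curvature `K ≡ 0`,
one has `c(g) + [g,g] = g`. -/
theorem flat_cyclic_center_add_derived_eq_top
    {g : Type*} [NormedAddCommGroup g] [NormedSpace ℝ g] [FiniteDimensional ℝ g]
    (L : g →ₗ[ℝ] g →ₗ[ℝ] g) (hL : IsLieBracket L)
    (F : g → ℝ) (hF : IsMinkowskiNorm F) (hcyc : IsCyclicNorm L F)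
    (η : g → g) (N : g → g → g)
    (hη : ∀ y : g, y ≠ 0 → ∀ u : g, gTensor F y (η y) u = gTensor F y y (L u y))
    (hN : ∀ y : g, y ≠ 0 → ∀ u v : g,
      2 * gTensor F y (N y v) u =
        gTensor F y (L u v) y + gTensor F y (L u y) v + gTensor F y (L v y) u
          - 2 * cartanTensor F y u v (η y))
    (hNdiff : ∀ u : g, DifferentiableOn ℝ (fun z => N z u) {(0 : g)}ᶜ)
    (hflat : ∀ y : g, y ≠ 0 → ∀ u : g, gTensor F y (RiemannCurv L η N y u) u = 0) :
    centerOf L ⊔ derivedOf L = ⊤ :=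
  flat_cyclic_center_add_derived_eq_top_general L hL F hF hcyc η N hη hN hflat

end
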